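/- Let R be a biinvertible solution of the quantum Yang–Baxter equation. Define the n-fold iterated algebra B(R) ⋊ B(R) ⋊ ⋯ ⋊ B(R) with generators u⁽¹⁾, …, u⁽ⁿ⁾ (each an n×n matrix of generators) and relations R₂₁ u₁⁽ⁱ⁾ R u₂⁽ʲ⁾ = u₂⁽ʲ⁾ R₂₁ u₁⁽ⁱ⁾ R for all i ≥ j. Then the assignment Δ(u⁽ⁱ⁾) = u⁽ⁱ⁾ ⊗ u⁽ⁱ⁾ (matrix coproduct Δ(u⁽ⁱ⁾ᵃᵦ) = Σ_c u⁽ⁱ⁾ᵃ_c ⊗ u⁽ⁱ⁾ᶜᵦ), extended to the braided tensor product of two copies of this algebra with cross relations R⁻¹ v₁⁽ⁱ⁾ R u₂⁽ʲ⁾ = u₂⁽ʲ⁾ R⁻¹ v₁⁽ⁱ⁾ R for all i, j (v denoting generators of the second tensor factor), defines an algebra homomorphism, making the chain a braided bialgebra. -/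

import Mathlib

/-! The comultiplication `Δ(u⁽ⁱ⁾) = u⁽ⁱ⁾v⁽ⁱ⁾` respects the chain relations because the
product `R₂₁ (u⁽ⁱ⁾v⁽ⁱ⁾)₁ R (u⁽ʲ⁾v⁽ʲ⁾)₂` can be reordered one factor at a time: `v⁽ⁱ⁾₁` passes
`R u⁽ʲ⁾₂` by the cross relation, `u⁽ⁱ⁾₁` passes `u⁽ʲ⁾₂` and `v⁽ⁱ⁾₁` passes `v⁽ʲ⁾₂` by the chain
relations, and finally `u⁽ⁱ⁾₁` passes `v⁽ʲ⁾₂` by the cross relation conjugated by the flip of the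
two tensor legs, which turns `R` into `R₂₁`. The reordering is pure monoid algebra once `R` and
`R₂₁` are units. -/

open scoped Matrix

variable {k : Type*} [Field k] {n : ℕ}

/-- `u ⊗ I` (leg 1) of an `n × n` matrix with entries in an algebra. -/
def leg1 {A : Type*} [Ring A] (u : Matrix (Fin n) (Fin n) A) :
    Matrix (Fin n × Fin n) (Fin n × Fin n) A :=
  fun p q => if p.2 = q.2 then u p.1 q.1 else 0

/-- `I ⊗ u` (leg 2) of an `n × n` matrix with entries in an algebra. -/
def leg2 {A : Type*} [Ring A] (u : Matrix (Fin n) (Fin n) A) :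
    Matrix (Fin n × Fin n) (Fin n × Fin n) A :=
  fun p q => if p.1 = q.1 then u p.2 q.2 else 0

/-- `R₂₁ = τ(R)`. -/
def flip21 (R : Matrix (Fin n × Fin n) (Fin n × Fin n) k) :
    Matrix (Fin n × Fin n) (Fin n × Fin n) k :=
  fun p q => R (p.2, p.1) (q.2, q.1)

/-- Base change of a scalar matrix into an algebra. -/
def mapA (A : Type*) [Ring A] [Algebra k A]
    (R : Matrix (Fin n × Fin n) (Fin n × Fin n) k) :
    Matrix (Fin n × Fin n) (Fin n × Fin n) A :=
  R.map (algebraMap k A)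

/-- `R₁₂` acting on the triple tensor product. -/
def L12 (R : Matrix (Fin n × Fin n) (Fin n × Fin n) k) :
    Matrix (Fin n × Fin n × Fin n) (Fin n × Fin n × Fin n) k :=
  fun p q => if p.2.2 = q.2.2 then R (p.1, p.2.1) (q.1, q.2.1) else 0

/-- `R₁₃` acting on the triple tensor product. -/
def L13 (R : Matrix (Fin n × Fin n) (Fin n × Fin n) k) :
    Matrix (Fin n × Fin n × Fin n) (Fin n × Fin n × Fin n) k :=
  fun p q => if p.2.1 = q.2.1 then R (p.1, p.2.2) (q.1, q.2.2) else 0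

/-- `R₂₃` acting on the triple tensor product. -/
def L23 (R : Matrix (Fin n × Fin n) (Fin n × Fin n) k) :
    Matrix (Fin n × Fin n × Fin n) (Fin n × Fin n × Fin n) k :=
  fun p q => if p.1 = q.1 then R (p.2.1, p.2.2) (q.2.1, q.2.2) else 0

/-- The quantum Yang–Baxter equation `R₁₂ R₁₃ R₂₃ = R₂₃ R₁₃ R₁₂`. -/
def QYBE (R : Matrix (Fin n × Fin n) (Fin n × Fin n) k) : Prop :=
  L12 R * L13 R * L23 R = L23 R * L13 R * L12 R

/-- Biinvertibility: `R` is invertible and has a second inverse `R̃` with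
`R̃ᵃᵢᵇⱼ Rʲᵇₖᶜ = δᵃₖ δᶜᵢ`. -/
def Biinvertible (R : Matrix (Fin n × Fin n) (Fin n × Fin n) k) : Prop :=
  (∃ Ri, R * Ri = 1 ∧ Ri * R = 1) ∧
  (∃ Rt : Matrix (Fin n × Fin n) (Fin n × Fin n) k, ∀ a i c kk : Fin n,
    (∑ b : Fin n, ∑ j : Fin n, Rt (a, i) (b, j) * R (j, b) (kk, c))
      = if a = kk ∧ c = i then 1 else 0)

/-- The reflection-equation (braided matrix) relation
`R₂₁ u₁ R v₂ = v₂ R₂₁ u₁ R` for matrices `u, v` with entries in a `k`-algebra `A`. -/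
def ReflRel {A : Type*} [Ring A] [Algebra k A]
    (R : Matrix (Fin n × Fin n) (Fin n × Fin n) k)
    (u v : Matrix (Fin n) (Fin n) A) : Prop :=
  mapA A (flip21 R) * leg1 u * mapA A R * leg2 v
    = leg2 v * mapA A (flip21 R) * leg1 u * mapA A R

/-- The braided tensor product (cross) relation `R⁻¹ v₁ R u₂ = u₂ R⁻¹ v₁ R`,
where `Ri` is the inverse of `R`. -/
def CrossRel {A : Type*} [Ring A] [Algebra k A]
    (Ri R : Matrix (Fin n × Fin n) (Fin n × Fin n) k)
    (v u : Matrix (Fin n) (Fin n) A) : Prop :=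
  mapA A Ri * leg1 v * mapA A R * leg2 u = leg2 u * mapA A Ri * leg1 v * mapA A R

theorem reflection_relation_mul {M : Type*} [Monoid M] (S T : Mˣ) {U₁ V₁ U₂ V₂ : M}
    (hU : T * U₁ * S * U₂ = U₂ * T * U₁ * S)
    (hV : T * V₁ * S * V₂ = V₂ * T * V₁ * S)
    (hVU : ↑S⁻¹ * V₁ * S * U₂ = U₂ * ↑S⁻¹ * V₁ * S)
    (hUV : ↑T⁻¹ * V₂ * T * U₁ = U₁ * ↑T⁻¹ * V₂ * T) :
    T * (U₁ * V₁) * S * (U₂ * V₂) = U₂ * V₂ * T * (U₁ * V₁) * S := by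
  calc T * (U₁ * V₁) * S * (U₂ * V₂)
      = T * U₁ * S * (↑S⁻¹ * V₁ * S * U₂) * V₂ := by simp only [mul_assoc, S.mul_inv_cancel_left]
    _ = T * U₁ * S * U₂ * ↑S⁻¹ * (V₁ * S * V₂) := by rw [hVU]; simp only [mul_assoc]
    _ = U₂ * T * U₁ * ↑T⁻¹ * (T * V₁ * S * V₂) := by
        rw [hU]; simp only [mul_assoc, S.mul_inv_cancel_left, T.inv_mul_cancel_left]
    _ = U₂ * T * (U₁ * ↑T⁻¹ * V₂ * T) * V₁ * S := by rw [hV]; simp only [mul_assoc]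
    _ = U₂ * V₂ * T * (U₁ * V₁) * S := by
        rw [← hUV]; simp only [mul_assoc, T.mul_inv_cancel_left]

theorem leg1_mul {A : Type*} [Ring A] (u v : Matrix (Fin n) (Fin n) A) :
    leg1 (u * v) = leg1 u * leg1 v := by
  ext p q
  simp only [leg1, Matrix.mul_apply, Fintype.sum_prod_type]
  by_cases h : p.2 = q.2 <;> simp [h]

theorem leg2_mul {A : Type*} [Ring A] (u v : Matrix (Fin n) (Fin n) A) :
    leg2 (u * v) = leg2 u * leg2 v := by
  ext p q
  simp only [leg2, Matrix.mul_apply, Fintype.sum_prod_type]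
  by_cases h : p.1 = q.1 <;> simp [h]

def swapLegs (K A : Type*) [CommSemiring K] [Semiring A] [Algebra K A] :
    Matrix (Fin n × Fin n) (Fin n × Fin n) A ≃ₐ[K] Matrix (Fin n × Fin n) (Fin n × Fin n) A :=
  Matrix.reindexAlgEquiv K A (Equiv.prodComm (Fin n) (Fin n))

theorem CrossRel.swap_legs {A : Type*} [Ring A] [Algebra k A]
    {Ri R : Matrix (Fin n × Fin n) (Fin n × Fin n) k} {v u : Matrix (Fin n) (Fin n) A}
    (h : CrossRel Ri R v u) :
    mapA A (flip21 Ri) * leg2 v * mapA A (flip21 R) * leg1 u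
      = leg1 u * mapA A (flip21 Ri) * leg2 v * mapA A (flip21 R) := by
  have h' := congrArg (swapLegs k A) h
  simp only [map_mul] at h'
  exact h'

theorem braided_spin_chain_comul_well_defined_general
    (R : Matrix (Fin n × Fin n) (Fin n × Fin n) k)
    (Ri : Matrix (Fin n × Fin n) (Fin n × Fin n) k)
    (hRi : R * Ri = 1 ∧ Ri * R = 1)
    (A : Type*) [Ring A] [Algebra k A]
    (N : ℕ) (u v : Fin N → Matrix (Fin n) (Fin n) A)
    (hu : ∀ i j, j ≤ i → ReflRel R (u i) (u j))
    (hv : ∀ i j, j ≤ i → ReflRel R (v i) (v j))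
    (hcross : ∀ i j, CrossRel Ri R (v i) (u j)) :
    ∀ i j, j ≤ i → ReflRel R (u i * v i) (u j * v j) := by
  intro i j hij
  let S : (Matrix (Fin n × Fin n) (Fin n × Fin n) A)ˣ :=
    Units.map (algebraMap k A).mapMatrix.toMonoidHom ⟨R, Ri, hRi.1, hRi.2⟩
  let T := Units.map (swapLegs k A).toMonoidHom S
  rw [ReflRel, leg1_mul, leg2_mul]
  exact reflection_relation_mul S T (hu i j hij) (hv i j hij) (hcross i j) (hcross j i).swap_legs

theorem braided_spin_chain_comul_well_defined
    (R : Matrix (Fin n × Fin n) (Fin n × Fin n) k)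
    (hYB : QYBE R) (hbi : Biinvertible R)
    (Ri : Matrix (Fin n × Fin n) (Fin n × Fin n) k)
    (hRi : R * Ri = 1 ∧ Ri * R = 1)
    (A : Type*) [Ring A] [Algebra k A]
    (N : ℕ) (u v : Fin N → Matrix (Fin n) (Fin n) A)
    (hu : ∀ i j, j ≤ i → ReflRel R (u i) (u j))
    (hv : ∀ i j, j ≤ i → ReflRel R (v i) (v j))
    (hcross : ∀ i j, CrossRel Ri R (v i) (u j)) :
    ∀ i j, j ≤ i → ReflRel R (u i * v i) (u j * v j) :=
  braided_spin_chain_comul_well_defined_general R Ri hRi A N u v hu hv hcross
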